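/- With the same notation, if Dᵀ D = diag(n₁+1,…,n_s+1), then h(x₁,…,x_q+τ,…,x_s) = h(x₁,…,x_s) for each q (wherever both sides are defined), i.e., h is doubly periodic in each variable with respect to the lattice ℤ + ℤτ. -/

import Mathlib

/-!
Translating `v` by `mτ` multiplies `θ` by `exp(πi(m - m²τ - 2mv))`, and since `m² ≡ m (mod 2)`
this factor equals `exp(πi(m²(1 - τ) - 2mv))`. Shifting `x_q` by `τ` shifts the `p`-th numerator
argument `∑_r d_{pr} x_r` by `d_{pq} τ`, so the numerator picks up
`exp(πi((∑_p d_{pq}²)(1 - τ) - 2 ∑_p d_{pq} ∑_r d_{pr} x_r))`. The column relations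
`Dᵀ D = diag(n₁+1, …, n_s+1)` turn this into `exp(πi(1 - τ - 2x_q))^{n_q+1}`, which is exactly
the factor picked up by the denominator `(θ(x_q)/θ'(0))^{n_q+1}`.
-/

open Complex Matrix Finset
open scoped Real

namespace Finset

@[to_additive]
theorem prod_update_mul_self {ι M : Type*} [Fintype ι] [DecidableEq ι] [CommMonoid M]
    (f : ι → M) (q : ι) (c : M) :
    ∏ r, Function.update f q (c * f q) r = c * ∏ r, f r := by
  rw [prod_update_of_mem (mem_univ q), ← mul_prod_erase univ f (mem_univ q), mul_assoc,
    sdiff_singleton_eq_erase]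

theorem sum_mul_update_add {ι R : Type*} [Fintype ι] [DecidableEq ι] [CommSemiring R]
    (c x : ι → R) (q : ι) (y : R) :
    ∑ r, c r * Function.update x q (x q + y) r = ∑ r, c r * x r + c q * y := by
  have hupd (r : ι) : c r * Function.update x q (x q + y) r =
      Function.update (fun r => c r * x r) q (c q * y + c q * x q) r := by
    rcases eq_or_ne r q with rfl | hr <;> simp [*, mul_add, add_comm]
  simp_rw [hupd, sum_update_add_self, add_comm]

end Finset

namespace Matrix

variable {m k : Type*} [Fintype m] [DecidableEq k] {D : Matrix m k ℤ} {d : k → ℤ}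

theorem sum_sq_of_transpose_mul_self_eq_diagonal (hD : Dᵀ * D = diagonal d) (q : k) :
    ∑ p, D p q ^ 2 = d q := by
  simpa [mul_apply, sq] using congrFun₂ hD q q

theorem sum_mul_sum_of_transpose_mul_self_eq_diagonal [Fintype k] {R : Type*} [CommRing R]
    (hD : Dᵀ * D = diagonal d) (x : k → R) (q : k) :
    ∑ p, (D p q : R) * ∑ r, (D p r : R) * x r = d q * x q := by
  have hcol (r : k) : ∑ p, (D p q : R) * D p r = if q = r then (d q : R) else 0 := by
    simpa [mul_apply, diagonal_apply, apply_ite] using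
      congrArg (Int.cast : ℤ → R) (congrFun₂ hD q r)
  simp_rw [mul_sum, ← mul_assoc]
  rw [sum_comm]
  simp_rw [← sum_mul, hcol, ite_mul, zero_mul, sum_ite_eq, if_pos (mem_univ q)]

end Matrix

noncomputable def thetaMultiplier (τ : ℂ) (m : ℤ) (v : ℂ) : ℂ :=
  exp (π * I * (m - m ^ 2 * τ - 2 * m * v))

theorem thetaMultiplier_ne_zero (τ : ℂ) (m : ℤ) (v : ℂ) : thetaMultiplier τ m v ≠ 0 :=
  exp_ne_zero _

theorem thetaMultiplier_add_one (τ : ℂ) (m : ℤ) (v : ℂ) :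
    thetaMultiplier τ (m + 1) v = thetaMultiplier τ 1 (v + m * τ) * thetaMultiplier τ m v := by
  simp only [thetaMultiplier, ← exp_add]
  congr 1
  push_cast
  ring

theorem thetaMultiplier_eq (τ : ℂ) (m : ℤ) (v : ℂ) :
    thetaMultiplier τ m v = exp (π * I * (m ^ 2 * (1 - τ) - 2 * m * v)) := by
  obtain ⟨c, hc⟩ := Int.even_mul_pred_self m
  refine exp_eq_exp_iff_exists_int.2 ⟨-c, ?_⟩
  have hsq : (m : ℂ) ^ 2 = m + 2 * c := by
    exact_mod_cast (by linear_combination hc : m ^ 2 = m + 2 * c)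
  rw [hsq]
  push_cast
  ring

theorem prod_thetaMultiplier {ι : Type*} {s : Finset ι} {τ : ℂ} {a : ι → ℤ} {w : ι → ℂ} {N : ℤ}
    {y : ℂ} (ha : ∑ i ∈ s, a i ^ 2 = N) (haw : ∑ i ∈ s, (a i : ℂ) * w i = N * y) :
    ∏ i ∈ s, thetaMultiplier τ (a i) (w i) = thetaMultiplier τ 1 y ^ N := by
  have ha' : ∑ i ∈ s, (a i : ℂ) ^ 2 = N := by exact_mod_cast ha
  have haw' : ∑ i ∈ s, 2 * (a i : ℂ) * w i = 2 * (N * y) := by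
    simp_rw [mul_assoc, ← mul_sum, haw]
  simp_rw [thetaMultiplier_eq, ← exp_sum, ← exp_int_mul]
  congr 1
  rw [← mul_sum, sum_sub_distrib, ← sum_mul, ha', haw']
  push_cast
  ring

section

variable {θ : ℂ → ℂ} {τ : ℂ}

theorem theta_add_tau (hper : ∀ v : ℂ, θ (v + τ) =
      -Complex.exp (-(Real.pi * I * τ)) * Complex.exp (-2 * Real.pi * I * v) * θ v) (v : ℂ) :
    θ (v + τ) = thetaMultiplier τ 1 v * θ v := by
  have hneg (z : ℂ) : -exp z = exp (π * I + z) := by rw [exp_add, exp_pi_mul_I, neg_one_mul]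
  rw [hper, thetaMultiplier, hneg, ← exp_add]
  congr 2
  push_cast
  ring

theorem theta_add_int_mul_tau (hper : ∀ v : ℂ, θ (v + τ) = thetaMultiplier τ 1 v * θ v)
    (m : ℤ) (v : ℂ) : θ (v + m * τ) = thetaMultiplier τ m v * θ v := by
  have step (m : ℤ) :
      θ (v + (m + 1 : ℤ) * τ) = thetaMultiplier τ 1 (v + m * τ) * θ (v + m * τ) := by
    rw [← hper]
    push_cast
    ring_nf
  induction m using Int.induction_on with
  | zero => simp [thetaMultiplier]
  | succ k ih => rw [step, ih, thetaMultiplier_add_one, mul_assoc]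
  | pred k ih =>
    have h := step (-k - 1)
    rw [sub_add_cancel, ih, ← sub_add_cancel (-(k : ℤ)) 1, thetaMultiplier_add_one, mul_assoc,
      sub_add_cancel] at h
    exact (mul_left_cancel₀ (thetaMultiplier_ne_zero _ _ _) h).symm

end

theorem h_periodic_tau_general (t s : ℕ) (τ : ℂ)
    (θ : ℂ → ℂ) (θ'0 : ℂ)
    (hper : ∀ v : ℂ, θ (v + τ) =
      -Complex.exp (-(Real.pi * I * τ)) * Complex.exp (-2 * Real.pi * I * v) * θ v)
    (D : Matrix (Fin t) (Fin s) ℤ) (n : Fin s → ℤ)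
    (hD : Dᵀ * D = Matrix.diagonal (fun q => n q + 1))
    (x : Fin s → ℂ) (q : Fin s) :
    (∏ p : Fin t, θ (∑ r, (D p r : ℂ) * Function.update x q (x q + τ) r) / θ'0) /
        ∏ r : Fin s, (θ (Function.update x q (x q + τ) r) / θ'0) ^ (n r + 1) =
      (∏ p : Fin t, θ (∑ r, (D p r : ℂ) * x r) / θ'0) /
        ∏ r : Fin s, (θ (x r) / θ'0) ^ (n r + 1) := by
  have hper' := theta_add_tau hper
  set J := thetaMultiplier τ 1 (x q) ^ (n q + 1)
  have hnum : ∏ p, θ (∑ r, (D p r : ℂ) * Function.update x q (x q + τ) r) / θ'0 =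
      J * ∏ p, θ (∑ r, (D p r : ℂ) * x r) / θ'0 := by
    simp_rw [sum_mul_update_add, theta_add_int_mul_tau hper', mul_div_assoc, prod_mul_distrib]
    rw [prod_thetaMultiplier (sum_sq_of_transpose_mul_self_eq_diagonal hD q)
      (sum_mul_sum_of_transpose_mul_self_eq_diagonal hD x q)]
  have hden : ∏ r, (θ (Function.update x q (x q + τ) r) / θ'0) ^ (n r + 1) =
      J * ∏ r, (θ (x r) / θ'0) ^ (n r + 1) := by
    rw [← prod_update_mul_self _ q]
    refine prod_congr rfl fun r _ => ?_
    rcases eq_or_ne r q with rfl | hr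
    · simp [hper', J, mul_div_assoc, mul_zpow]
    · simp [hr]
  rw [hnum, hden, mul_div_mul_left _ _ (zpow_ne_zero _ (thetaMultiplier_ne_zero _ _ _))]

/-- If `θ(v+τ) = -e^{-πiτ} e^{-2πiv} θ(v)` and `Dᵀ D = diag(n₁+1,…,n_s+1)`, then
`h(x) = (∏_p θ(∑_q d_{pq} x_q)/θ'(0)) / ∏_q (θ(x_q)/θ'(0))^{n_q+1}`
is invariant under `x_q ↦ x_q + τ`. -/
theorem h_periodic_tau (t s : ℕ) (τ : ℂ) (hτ : 0 < τ.im)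
    (θ : ℂ → ℂ) (θ'0 : ℂ) (hθ'0 : θ'0 ≠ 0)
    (hper : ∀ v : ℂ, θ (v + τ) =
      -Complex.exp (-(Real.pi * I * τ)) * Complex.exp (-2 * Real.pi * I * v) * θ v)
    (D : Matrix (Fin t) (Fin s) ℤ) (n : Fin s → ℤ)
    (hD : Dᵀ * D = Matrix.diagonal (fun q => n q + 1))
    (x : Fin s → ℂ) (q : Fin s) :
    (∏ p : Fin t, θ (∑ r, (D p r : ℂ) * Function.update x q (x q + τ) r) / θ'0) /
        ∏ r : Fin s, (θ (Function.update x q (x q + τ) r) / θ'0) ^ (n r + 1) =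
      (∏ p : Fin t, θ (∑ r, (D p r : ℂ) * x r) / θ'0) /
        ∏ r : Fin s, (θ (x r) / θ'0) ^ (n r + 1) :=
  h_periodic_tau_general t s τ θ θ'0 hper D n hD x q
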